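/- Let S and W be b-weakly right cancellative discrete semigroups (for some b ∈ ℕ) each with an identity, with nets E in P_f(S) and F in P_f(W). Then for A ⊆ S and B ⊆ W, the product A × B is a D-set in S × W with respect to the product net E*F if and only if A is a D-set in S with respect to E and B is a D-set in W with respect to F. -/

import Mathlib

open scoped Classical symmDiff

/-- The translate `F · s` of a finite piece `F` by an element of `S ∪ {1}`
(`none` meaning "no shift"). -/
def netShift {S : Type*} [Mul S] (F : Set S) : Option S → Set S
  | none => F
  | some t => (· * t) '' F

/-- Upper Banach density of `A ⊆ S` with respect to a net `F = ⟨F i⟩` of finite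
nonempty subsets of `S`, indexed by a directed preorder `I`. -/
noncomputable def uBD {S : Type*} [Mul S] {I : Type*} [Preorder I]
    (F : I → Set S) (A : Set S) : ℝ :=
  sSup {α : ℝ | ∀ i₀ : I, ∃ i, i₀ ≤ i ∧ ∃ s : Option S,
    α * ((F i).ncard : ℝ) ≤ ((A ∩ netShift (F i) s).ncard : ℝ)}

attribute [local instance] Ultrafilter.mul

/-!
For the forward direction, the coordinate projections are homomorphisms, so they carry an
idempotent `r ∈ D*_{E*F}` to idempotents, and a set of positive density in `S × W` of the form
`C × W` forces `C` to have positive density in `S`.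

For the converse, `d*(C × D) ≥ d*(C) · d*(D)`, so every member of `p × q` has positive density;
since sets of density zero form an ideal, some ultrafilter `r₀ ∈ D*_{E*F}` projects onto `p` and
`q`. Weak right cancellativity of `S × W` makes `D*_{E*F}` a closed right ideal of `β(S × W)`, so
`D*_{E*F} ∩ π₁⁻¹(p) ∩ π₂⁻¹(q)` is a nonempty compact subsemigroup; an idempotent `r` in it contains
`π₁⁻¹(A) ∩ π₂⁻¹(B) = A × B`.
-/

open Set Filter

def IsWeaklyRightCancellative (T : Type*) [Mul T] (b : ℕ) : Prop :=
  ∀ t u : T, {s : T | s * t = u}.Finite ∧ {s : T | s * t = u}.ncard ≤ b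

namespace IsWeaklyRightCancellative

variable {T : Type*} [Mul T] {c : ℕ}

theorem prod {W : Type*} [Mul W] {b : ℕ} (hT : IsWeaklyRightCancellative T b)
    (hW : IsWeaklyRightCancellative W c) : IsWeaklyRightCancellative (T × W) (b * c) := by
  rintro ⟨t₁, t₂⟩ ⟨u₁, u₂⟩
  have hfiber : {s : T × W | s * (t₁, t₂) = (u₁, u₂)} =
      {s | s * t₁ = u₁} ×ˢ {w | w * t₂ = u₂} := by
    ext
    simp [Prod.ext_iff]
  rw [hfiber, ncard_prod]
  exact ⟨(hT t₁ u₁).1.prod (hW t₂ u₂).1, Nat.mul_le_mul (hT t₁ u₁).2 (hW t₂ u₂).2⟩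

theorem pos [Nonempty T] (hT : IsWeaklyRightCancellative T c) : 0 < c := by
  obtain ⟨t⟩ := ‹Nonempty T›
  exact ((ncard_pos (hT t (t * t)).1).2 ⟨t, rfl⟩).trans_le (hT t (t * t)).2

theorem ncard_le_mul_ncard_image (hT : IsWeaklyRightCancellative T c) {X : Set T}
    (hX : X.Finite) (y : T) : X.ncard ≤ c * ((· * y) '' X).ncard := by
  lift X to Finset T using hX
  rw [ncard_coe_finset, ← Finset.coe_image, ncard_coe_finset]
  refine Finset.card_le_mul_card_image X c fun z _ => ?_
  calc (X.filter (· * y = z)).card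
      = ((X.filter (· * y = z) : Finset T) : Set T).ncard := (ncard_coe_finset _).symm
    _ ≤ {s | s * y = z}.ncard := ncard_le_ncard (fun s hs => (Finset.mem_filter.1 hs).2) (hT y z).1
    _ ≤ c := (hT y z).2

end IsWeaklyRightCancellative

section netShift

variable {T : Type*}

theorem netShift_finite [Mul T] {F : Set T} (hF : F.Finite) : ∀ s, (netShift F s).Finite
  | none => hF
  | some _ => hF.image _

theorem ncard_netShift_le [Mul T] {F : Set T} (hF : F.Finite) :
    ∀ s, (netShift F s).ncard ≤ F.ncard
  | none => le_rfl
  | some _ => ncard_image_le hF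

theorem image_mul_right_netShift [Semigroup T] (F : Set T) (y : T) :
    ∀ s, (· * y) '' netShift F s = netShift F (some (s.elim y (· * y)))
  | none => rfl
  | some t => by simp [netShift, image_image, mul_assoc]

theorem ncard_inter_netShift_le [Mul T] {F : Set T} (hF : F.Finite) (D : Set T) (s : Option T) :
    (D ∩ netShift F s).ncard ≤ F.ncard :=
  (ncard_le_ncard inter_subset_right (netShift_finite hF s)).trans (ncard_netShift_le hF s)

theorem exists_netShift_eq_some [Monoid T] (F : Set T) :
    ∀ s, ∃ t, netShift F s = netShift F (some t)
  | none => ⟨1, by simp [netShift]⟩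
  | some t => ⟨t, rfl⟩

theorem ncard_prod_inter_netShift_prod {S W : Type*} [Mul S] [Mul W] (C E : Set S) (D F : Set W)
    (t : S) (w : W) :
    ((C ×ˢ D) ∩ netShift (E ×ˢ F) (some (t, w))).ncard =
      (C ∩ netShift E (some t)).ncard * (D ∩ netShift F (some w)).ncard := by
  have : netShift (E ×ˢ F) (some (t, w)) = netShift E (some t) ×ˢ netShift F (some w) :=
    (prod_image_image_eq (m₁ := (· * t)) (m₂ := (· * w))).symm
  rw [this, prod_inter_prod, ncard_prod]

end netShift

section density

variable {T K : Type*} [Preorder K] {G : K → Set T} {A B : Set T}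

def uBDSet [Mul T] (G : K → Set T) (A : Set T) : Set ℝ :=
  {α | ∀ i₀, ∃ i, i₀ ≤ i ∧ ∃ s, α * (G i).ncard ≤ (A ∩ netShift (G i) s).ncard}

/-- The paper's `D*_G`. -/
def dStar [Mul T] (G : K → Set T) : Set (Ultrafilter T) :=
  {r | ∀ C ∈ r, 0 < uBD G C}

variable [Mul T]

theorem uBD_eq_sSup_uBDSet : uBD G A = sSup (uBDSet G A) := rfl

theorem le_one_of_mem_uBDSet [Nonempty K] (hGfin : ∀ i, (G i).Finite)
    (hGne : ∀ i, (G i).Nonempty) {α : ℝ} (hα : α ∈ uBDSet G A) : α ≤ 1 := by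
  obtain ⟨i, -, s, hs⟩ := hα (Classical.arbitrary K)
  have hpos : (0 : ℝ) < (G i).ncard := by exact_mod_cast (ncard_pos (hGfin i)).2 (hGne i)
  have hle : ((A ∩ netShift (G i) s).ncard : ℝ) ≤ (G i).ncard := by
    exact_mod_cast ncard_inter_netShift_le (hGfin i) A s
  nlinarith

theorem uBD_pos_iff [Nonempty K] (hGfin : ∀ i, (G i).Finite) (hGne : ∀ i, (G i).Nonempty) :
    0 < uBD G A ↔ ∃ α, 0 < α ∧ α ∈ uBDSet G A := by
  rw [uBD_eq_sSup_uBDSet]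
  refine ⟨fun h => ?_, fun ⟨α, hα0, hα⟩ => hα0.trans_le ?_⟩
  · by_contra! hnone
    exact h.not_ge (Real.sSup_nonpos fun α hα => not_lt.1 fun hα0 => hnone α hα0 hα)
  · exact le_csSup ⟨1, fun _ => le_one_of_mem_uBDSet hGfin hGne⟩ hα

theorem uBDSet_mono (hGfin : ∀ i, (G i).Finite) (hAB : A ⊆ B) : uBDSet G A ⊆ uBDSet G B := by
  intro α hα i₀
  obtain ⟨i, hi, s, hs⟩ := hα i₀
  refine ⟨i, hi, s, hs.trans ?_⟩
  exact_mod_cast ncard_le_ncard (inter_subset_inter_left _ hAB)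
    ((netShift_finite (hGfin i) s).subset inter_subset_right)

variable [Nonempty K] (hGfin : ∀ i, (G i).Finite) (hGne : ∀ i, (G i).Nonempty)
include hGfin hGne

theorem uBD_pos_mono (hAB : A ⊆ B) (h : 0 < uBD G A) : 0 < uBD G B := by
  obtain ⟨α, hα0, hα⟩ := (uBD_pos_iff hGfin hGne).1 h
  exact (uBD_pos_iff hGfin hGne).2 ⟨α, hα0, uBDSet_mono hGfin hAB hα⟩

theorem not_uBD_pos_empty : ¬ 0 < uBD G ∅ := by
  rw [uBD_pos_iff hGfin hGne]
  rintro ⟨α, hα0, hα⟩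
  obtain ⟨i, -, s, hs⟩ := hα (Classical.arbitrary K)
  have hpos : (0 : ℝ) < (G i).ncard := by exact_mod_cast (ncard_pos (hGfin i)).2 (hGne i)
  simp only [empty_inter, ncard_empty, Nat.cast_zero] at hs
  nlinarith

/-- If `A` and `B` both stay below density `α / 2` eventually, they do so beyond a common index,
where `A ∪ B` stays below `α`. -/
theorem uBD_pos_union (hdir : ∀ i j : K, ∃ k, i ≤ k ∧ j ≤ k) (h : 0 < uBD G (A ∪ B)) :
    0 < uBD G A ∨ 0 < uBD G B := by
  obtain ⟨α, hα0, hα⟩ := (uBD_pos_iff hGfin hGne).1 h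
  rw [uBD_pos_iff hGfin hGne, uBD_pos_iff hGfin hGne]
  by_contra! hAB
  have hA := hAB.1 (α / 2) (by positivity)
  have hB := hAB.2 (α / 2) (by positivity)
  simp only [uBDSet, mem_ofPred_eq, not_forall, not_exists, not_and, not_le] at hA hB
  obtain ⟨i₁, hA⟩ := hA
  obtain ⟨i₂, hB⟩ := hB
  obtain ⟨k, hk₁, hk₂⟩ := hdir i₁ i₂
  obtain ⟨i, hi, s, hs⟩ := hα k
  have hsplit : (((A ∪ B) ∩ netShift (G i) s).ncard : ℝ) ≤
      (A ∩ netShift (G i) s).ncard + (B ∩ netShift (G i) s).ncard := by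
    rw [union_inter_distrib_right]
    exact_mod_cast ncard_union_le _ _
  linarith [hA i (hk₁.trans hi) s, hB i (hk₂.trans hi) s]

theorem exists_ultrafilter_le_mem_dStar (hdir : ∀ i j : K, ∃ k, i ≤ k ∧ j ≤ k) {f : Filter T}
    (hf : ∀ C ∈ f, 0 < uBD G C) : ∃ r : Ultrafilter T, ↑r ≤ f ∧ r ∈ dStar G := by
  let coNull : Filter T := comk (fun C => ¬ 0 < uBD G C) (not_uBD_pos_empty hGfin hGne)
    (fun _ ht _ hst h => ht (uBD_pos_mono hGfin hGne hst h))
    (fun _ hs _ ht h => (uBD_pos_union hGfin hGne hdir h).elim hs ht)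
  have : (f ⊓ coNull).NeBot := by
    refine inf_neBot_iff.2 fun C hC Y hY => ?_
    by_contra hCY
    exact hY (uBD_pos_mono hGfin hGne (fun x hx hxY => hCY ⟨x, hx, hxY⟩) (hf C hC))
  obtain ⟨r, hr⟩ := Ultrafilter.exists_le (f ⊓ coNull)
  refine ⟨r, hr.trans inf_le_left, fun C hC => ?_⟩
  by_contra hnull
  exact Ultrafilter.compl_notMem_iff.2 hC (hr (mem_inf_of_right (by simpa [coNull] using hnull)))

end density

section rightIdeal

variable {T K : Type*} [Semigroup T] [Preorder K] [Nonempty K] {G : K → Set T}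
  (hGfin : ∀ i, (G i).Finite) (hGne : ∀ i, (G i).Nonempty)
include hGfin hGne

/-- Right translation by a fixed `y` chosen inside the finitely many `r'`-large sets
`x⁻¹ C`, `x ∈ X ∩ G_i s`, moves a density witness for `X` to one for `C`, losing the factor `c`. -/
theorem mul_mem_dStar {c : ℕ} (hT : IsWeaklyRightCancellative T c)
    {r : Ultrafilter T} (hr : r ∈ dStar G) (r' : Ultrafilter T) : r * r' ∈ dStar G := by
  intro C hC
  let X := {x | ∀ᶠ y in (r' : Filter T), x * y ∈ C}
  obtain ⟨α, hα0, hα⟩ := (uBD_pos_iff hGfin hGne).1 (hr X hC)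
  have : Nonempty T := ⟨(hGne (Classical.arbitrary K)).some⟩
  have hc : (0 : ℝ) < c := by exact_mod_cast hT.pos
  refine (uBD_pos_iff hGfin hGne).2 ⟨α / c, by positivity, fun i₀ => ?_⟩
  obtain ⟨i, hi, s, hs⟩ := hα i₀
  set Y := X ∩ netShift (G i) s
  have hYfin : Y.Finite := (netShift_finite (hGfin i) s).subset inter_subset_right
  obtain ⟨y, hy⟩ : ∃ y, ∀ x ∈ Y, x * y ∈ C :=
    ((eventually_all_finite hYfin).2 fun x hx => hx.1).exists
  refine ⟨i, hi, some (s.elim y (· * y)), ?_⟩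
  have hsub : (· * y) '' Y ⊆ C ∩ netShift (G i) (some (s.elim y (· * y))) := by
    rw [← image_mul_right_netShift]
    exact subset_inter (image_subset_iff.2 hy) (image_mono inter_subset_right)
  have hcard : (Y.ncard : ℝ) ≤ c * (C ∩ netShift (G i) (some (s.elim y (· * y)))).ncard := by
    exact_mod_cast (hT.ncard_le_mul_ncard_image hYfin y).trans (Nat.mul_le_mul_left c
      (ncard_le_ncard hsub ((netShift_finite (hGfin i) _).subset inter_subset_right)))
  rw [div_mul_eq_mul_div, div_le_iff₀ hc]
  linarith

end rightIdeal

theorem isClosed_dStar {T K : Type*} [Mul T] [Preorder K] (G : K → Set T) :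
    IsClosed (dStar G) := by
  have : dStar G = ⋂ (C : Set T) (_ : ¬ 0 < uBD G C), {r : Ultrafilter T | Cᶜ ∈ r} := by
    ext r
    simp only [dStar, mem_ofPred_eq, mem_iInter, Ultrafilter.compl_mem_iff_notMem]
    exact forall_congr' fun C => not_imp_not.symm
  rw [this]
  exact isClosed_biInter fun C _ => ultrafilter_isClosed_basic Cᶜ

namespace Ultrafilter

theorem continuous_map {α β : Type*} (f : α → β) : Continuous (Ultrafilter.map f) :=
  ultrafilterBasis_is_basis.continuous_iff.2 <| forall_mem_range.2 fun s =>
    ultrafilter_isOpen_basic (f ⁻¹' s)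

theorem map_mul {M N : Type*} [Mul M] [Mul N] (f : M →ₙ* N) (u v : Ultrafilter M) :
    (u * v).map f = u.map f * v.map f :=
  coe_injective <| Filter.ext' fun p => by
    simp only [coe_map, eventually_map, Ultrafilter.eventually_mul, _root_.map_mul]

theorem map_fst_mul {M N : Type*} [Mul M] [Mul N] (u v : Ultrafilter (M × N)) :
    (u * v).map Prod.fst = u.map Prod.fst * v.map Prod.fst :=
  map_mul (MulHom.fst M N) u v

theorem map_snd_mul {M N : Type*} [Mul M] [Mul N] (u v : Ultrafilter (M × N)) :
    (u * v).map Prod.snd = u.map Prod.snd * v.map Prod.snd :=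
  map_mul (MulHom.snd M N) u v

end Ultrafilter

section product

variable {S W I J : Type*}

/-- The product net `E * F` of the paper. -/
def netProd (E : I → Set S) (F : J → Set W) : I × J → Set (S × W) :=
  fun p => E p.1 ×ˢ F p.2

variable {E : I → Set S} {F : J → Set W}

theorem netProd_finite (hEfin : ∀ i, (E i).Finite) (hFfin : ∀ j, (F j).Finite) :
    ∀ p, (netProd E F p).Finite :=
  fun p => (hEfin p.1).prod (hFfin p.2)

theorem netProd_nonempty (hEne : ∀ i, (E i).Nonempty) (hFne : ∀ j, (F j).Nonempty) :
    ∀ p, (netProd E F p).Nonempty :=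
  fun p => (hEne p.1).prod (hFne p.2)

variable [Preorder I] [Preorder J] [Monoid S] [Monoid W]

theorem mul_mem_uBDSet_netProd {A : Set S} {B : Set W} {α β : ℝ} (hβ0 : 0 ≤ β)
    (hα : α ∈ uBDSet E A) (hβ : β ∈ uBDSet F B) : α * β ∈ uBDSet (netProd E F) (A ×ˢ B) := by
  rintro ⟨i₀, j₀⟩
  obtain ⟨i, hi, s, hs⟩ := hα i₀
  obtain ⟨j, hj, u, hu⟩ := hβ j₀
  obtain ⟨t, ht⟩ := exists_netShift_eq_some (E i) s
  obtain ⟨w, hw⟩ := exists_netShift_eq_some (F j) u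
  rw [ht] at hs
  rw [hw] at hu
  refine ⟨(i, j), ⟨hi, hj⟩, some (t, w), ?_⟩
  simp only [netProd, ncard_prod_inter_netShift_prod, ncard_prod, Nat.cast_mul]
  calc α * β * ((E i).ncard * (F j).ncard) = (α * (E i).ncard) * (β * (F j).ncard) := by ring
    _ ≤ _ := mul_le_mul hs hu (by positivity) (by positivity)

theorem mem_uBDSet_left_of_mem_uBDSet_netProd [Nonempty J] (hFfin : ∀ j, (F j).Finite)
    (hFne : ∀ j, (F j).Nonempty) {C : Set S} {D : Set W} {α : ℝ}
    (hα : α ∈ uBDSet (netProd E F) (C ×ˢ D)) : α ∈ uBDSet E C := by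
  intro i₀
  obtain ⟨⟨i, j⟩, ⟨hi, -⟩, s, hs⟩ := hα (i₀, Classical.arbitrary J)
  obtain ⟨⟨t, w⟩, hst⟩ := exists_netShift_eq_some (E i ×ˢ F j) s
  refine ⟨i, hi, some t, ?_⟩
  simp only [netProd, hst, ncard_prod_inter_netShift_prod, ncard_prod, Nat.cast_mul] at hs
  have hFpos : (0 : ℝ) < (F j).ncard := by exact_mod_cast (ncard_pos (hFfin j)).2 (hFne j)
  have hD : ((D ∩ netShift (F j) (some w)).ncard : ℝ) ≤ (F j).ncard := by
    exact_mod_cast ncard_inter_netShift_le (hFfin j) D _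
  refine le_of_mul_le_mul_right ?_ hFpos
  calc α * (E i).ncard * (F j).ncard = α * ((E i).ncard * (F j).ncard) := by ring
    _ ≤ _ := hs
    _ ≤ _ := mul_le_mul_of_nonneg_left hD (by positivity)

theorem mem_uBDSet_right_of_mem_uBDSet_netProd [Nonempty I] (hEfin : ∀ i, (E i).Finite)
    (hEne : ∀ i, (E i).Nonempty) {C : Set S} {D : Set W} {α : ℝ}
    (hα : α ∈ uBDSet (netProd E F) (C ×ˢ D)) : α ∈ uBDSet F D := by
  intro j₀
  obtain ⟨⟨i, j⟩, ⟨-, hj⟩, s, hs⟩ := hα (Classical.arbitrary I, j₀)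
  obtain ⟨⟨t, w⟩, hst⟩ := exists_netShift_eq_some (E i ×ˢ F j) s
  refine ⟨j, hj, some w, ?_⟩
  simp only [netProd, hst, ncard_prod_inter_netShift_prod, ncard_prod, Nat.cast_mul] at hs
  have hEpos : (0 : ℝ) < (E i).ncard := by exact_mod_cast (ncard_pos (hEfin i)).2 (hEne i)
  have hC : ((C ∩ netShift (E i) (some t)).ncard : ℝ) ≤ (E i).ncard := by
    exact_mod_cast ncard_inter_netShift_le (hEfin i) C _
  refine le_of_mul_le_mul_left ?_ hEpos
  calc (E i).ncard * (α * (F j).ncard) = α * ((E i).ncard * (F j).ncard) := by ring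
    _ ≤ _ := hs
    _ ≤ _ := mul_le_mul_of_nonneg_right hC (by positivity)

variable [Nonempty I] [Nonempty J] (hEfin : ∀ i, (E i).Finite) (hEne : ∀ i, (E i).Nonempty)
  (hFfin : ∀ j, (F j).Finite) (hFne : ∀ j, (F j).Nonempty)
include hEfin hEne hFfin hFne

theorem uBD_netProd_pos {A : Set S} {B : Set W} (hA : 0 < uBD E A) (hB : 0 < uBD F B) :
    0 < uBD (netProd E F) (A ×ˢ B) := by
  obtain ⟨α, hα0, hα⟩ := (uBD_pos_iff hEfin hEne).1 hA
  obtain ⟨β, hβ0, hβ⟩ := (uBD_pos_iff hFfin hFne).1 hB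
  exact (uBD_pos_iff (netProd_finite hEfin hFfin) (netProd_nonempty hEne hFne)).2
    ⟨α * β, mul_pos hα0 hβ0, mul_mem_uBDSet_netProd hβ0.le hα hβ⟩

theorem map_fst_mem_dStar {r : Ultrafilter (S × W)} (hr : r ∈ dStar (netProd E F)) :
    r.map Prod.fst ∈ dStar E := by
  intro C hC
  rw [Ultrafilter.mem_map, ← prod_univ] at hC
  obtain ⟨α, hα0, hα⟩ :=
    (uBD_pos_iff (netProd_finite hEfin hFfin) (netProd_nonempty hEne hFne)).1 (hr _ hC)
  exact (uBD_pos_iff hEfin hEne).2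
    ⟨α, hα0, mem_uBDSet_left_of_mem_uBDSet_netProd hFfin hFne hα⟩

theorem map_snd_mem_dStar {r : Ultrafilter (S × W)} (hr : r ∈ dStar (netProd E F)) :
    r.map Prod.snd ∈ dStar F := by
  intro D hD
  rw [Ultrafilter.mem_map, ← univ_prod] at hD
  obtain ⟨α, hα0, hα⟩ :=
    (uBD_pos_iff (netProd_finite hEfin hFfin) (netProd_nonempty hEne hFne)).1 (hr _ hD)
  exact (uBD_pos_iff hFfin hFne).2
    ⟨α, hα0, mem_uBDSet_right_of_mem_uBDSet_netProd hEfin hEne hα⟩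

theorem exists_mem_dStar_netProd_map_eq (hIdir : ∀ i j : I, ∃ k, i ≤ k ∧ j ≤ k)
    (hJdir : ∀ i j : J, ∃ k, i ≤ k ∧ j ≤ k) {p : Ultrafilter S} {q : Ultrafilter W}
    (hp : p ∈ dStar E) (hq : q ∈ dStar F) :
    ∃ r ∈ dStar (netProd E F), r.map Prod.fst = p ∧ r.map Prod.snd = q := by
  have hdir : ∀ a c : I × J, ∃ d, a ≤ d ∧ c ≤ d := by
    rintro ⟨i₁, j₁⟩ ⟨i₂, j₂⟩
    obtain ⟨i, hi₁, hi₂⟩ := hIdir i₁ i₂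
    obtain ⟨j, hj₁, hj₂⟩ := hJdir j₁ j₂
    exact ⟨(i, j), ⟨hi₁, hj₁⟩, ⟨hi₂, hj₂⟩⟩
  have hpq : ∀ Y ∈ (p : Filter S) ×ˢ (q : Filter W), 0 < uBD (netProd E F) Y := by
    intro Y hY
    obtain ⟨C, hC, D, hD, hCD⟩ := mem_prod_iff.1 hY
    exact uBD_pos_mono (netProd_finite hEfin hFfin) (netProd_nonempty hEne hFne) hCD
      (uBD_netProd_pos hEfin hEne hFfin hFne (hp C hC) (hq D hD))
  obtain ⟨r, hr, hrD⟩ := exists_ultrafilter_le_mem_dStar (netProd_finite hEfin hFfin)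
    (netProd_nonempty hEne hFne) hdir hpq
  exact ⟨r, hrD, Ultrafilter.coe_le_coe.1 (tendsto_fst.mono_left hr),
    Ultrafilter.coe_le_coe.1 (tendsto_snd.mono_left hr)⟩

attribute [local instance] Ultrafilter.semigroup in
theorem exists_idempotent_mem_dStar_netProd_map_eq {b c : ℕ}
    (hS : IsWeaklyRightCancellative S b) (hW : IsWeaklyRightCancellative W c)
    (hIdir : ∀ i j : I, ∃ k, i ≤ k ∧ j ≤ k) (hJdir : ∀ i j : J, ∃ k, i ≤ k ∧ j ≤ k)
    {p : Ultrafilter S} {q : Ultrafilter W} (hp : p ∈ dStar E) (hpp : p * p = p)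
    (hq : q ∈ dStar F) (hqq : q * q = q) :
    ∃ r : Ultrafilter (S × W), r * r = r ∧ r ∈ dStar (netProd E F) ∧
      r.map Prod.fst = p ∧ r.map Prod.snd = q := by
  let Z := dStar (netProd E F) ∩ ({r | r.map Prod.fst = p} ∩ {r | r.map Prod.snd = q})
  have hZne : Z.Nonempty := by
    obtain ⟨r, hr, hr₁, hr₂⟩ :=
      exists_mem_dStar_netProd_map_eq hEfin hEne hFfin hFne hIdir hJdir hp hq
    exact ⟨r, hr, hr₁, hr₂⟩
  have hZclosed : IsClosed Z := (isClosed_dStar _).inter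
    ((isClosed_singleton.preimage (Ultrafilter.continuous_map _)).inter
      (isClosed_singleton.preimage (Ultrafilter.continuous_map _)))
  have hZmul : ∀ x ∈ Z, ∀ y ∈ Z, x * y ∈ Z := by
    rintro x ⟨hx, hx₁, hx₂⟩ y ⟨-, hy₁, hy₂⟩
    refine ⟨mul_mem_dStar (netProd_finite hEfin hFfin) (netProd_nonempty hEne hFne)
      (hS.prod hW) hx y, ?_, ?_⟩
    · change (x * y).map Prod.fst = p
      rw [Ultrafilter.map_fst_mul, hx₁, hy₁, hpp]
    · change (x * y).map Prod.snd = q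
      rw [Ultrafilter.map_snd_mul, hx₂, hy₂, hqq]
  obtain ⟨r, ⟨hr, hr₁, hr₂⟩, hrr⟩ := exists_idempotent_in_compact_subsemigroup
    Ultrafilter.continuous_mul_left Z hZne hZclosed.isCompact hZmul
  exact ⟨r, hrr, hr, hr₁, hr₂⟩

end product

theorem prod_DSet_iff {S W : Type*} [Monoid S] [Monoid W]
    {I J : Type*} [Preorder I] [Preorder J] [Nonempty I] [Nonempty J]
    (b : ℕ)
    (hS : ∀ t u : S, {s : S | s * t = u}.Finite ∧ {s : S | s * t = u}.ncard ≤ b)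
    (hW : ∀ t u : W, {s : W | s * t = u}.Finite ∧ {s : W | s * t = u}.ncard ≤ b)
    (E : I → Set S) (F : J → Set W)
    (hEfin : ∀ i, (E i).Finite) (hEne : ∀ i, (E i).Nonempty)
    (hFfin : ∀ j, (F j).Finite) (hFne : ∀ j, (F j).Nonempty)
    (hIdir : ∀ i j : I, ∃ k, i ≤ k ∧ j ≤ k) (hJdir : ∀ i j : J, ∃ k, i ≤ k ∧ j ≤ k)
    (A : Set S) (B : Set W) :
    (∃ r : Ultrafilter (S × W), r * r = r ∧
        (∀ C ∈ r, 0 < uBD (fun p : I × J => E p.1 ×ˢ F p.2) C) ∧ A ×ˢ B ∈ r) ↔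
      (∃ p : Ultrafilter S, p * p = p ∧ (∀ C ∈ p, 0 < uBD E C) ∧ A ∈ p) ∧
      (∃ q : Ultrafilter W, q * q = q ∧ (∀ C ∈ q, 0 < uBD F C) ∧ B ∈ q) := by
  constructor
  · rintro ⟨r, hrr, hr, hAB⟩
    refine ⟨⟨r.map Prod.fst, ?_, map_fst_mem_dStar hEfin hEne hFfin hFne hr, ?_⟩,
      ⟨r.map Prod.snd, ?_, map_snd_mem_dStar hEfin hEne hFfin hFne hr, ?_⟩⟩
    · rw [← Ultrafilter.map_fst_mul, hrr]
    · exact Ultrafilter.mem_map.2 (mem_of_superset hAB fun _ h => h.1)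
    · rw [← Ultrafilter.map_snd_mul, hrr]
    · exact Ultrafilter.mem_map.2 (mem_of_superset hAB fun _ h => h.2)
  · rintro ⟨⟨p, hpp, hp, hA⟩, q, hqq, hq, hB⟩
    obtain ⟨r, hrr, hr, rfl, rfl⟩ := exists_idempotent_mem_dStar_netProd_map_eq hEfin hEne
      hFfin hFne hS hW hIdir hJdir hp hpp hq hqq
    exact ⟨r, hrr, hr, prod_eq A B ▸ inter_mem hA hB⟩
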